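/- Let L be a Lie series and g a grouplike element in T((ℝ^d)). If ⟨Lh − hL, φ⟩ = 0 for all grouplike h, for a fixed homogeneous φ ∈ T(ℝ^d), then ⟨exp(L) g exp(−L), φ⟩ = ⟨g, φ⟩. (Conjugation-invariance of the pairing follows from infinitesimal invariance under commutators with Lie elements.) -/

import Mathlib

abbrev Word (d : ℕ) := List (Fin d)
abbrev T (d : ℕ) := Word d →₀ ℝ

noncomputable def shuffleW {d : ℕ} : Word d → Word d → T d
  | [], v => Finsupp.single v 1
  | u, [] => Finsupp.single u 1
  | a :: u, b :: v =>
      Finsupp.mapDomain (List.cons a) (shuffleW u (b :: v)) +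
      Finsupp.mapDomain (List.cons b) (shuffleW (a :: u) v)
  termination_by u v => u.length + v.length

noncomputable def pairF {d : ℕ} (g : Word d → ℝ) (f : T d) : ℝ := f.sum fun x c => c * g x

def Grouplike {d : ℕ} (g : Word d → ℝ) : Prop :=
  g [] = 1 ∧ ∀ u v : Word d, pairF g (shuffleW u v) = g u * g v

/-- A Lie series: a primitive tensor series (Friedrichs' criterion). -/
def LieSeries {d : ℕ} (L : Word d → ℝ) : Prop :=
  L [] = 0 ∧ ∀ u v : Word d, u ≠ [] → v ≠ [] → pairF L (shuffleW u v) = 0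

/-- The concatenation product of tensor series, via Chen's formula. -/
noncomputable def mulFun {d : ℕ} (g h : Word d → ℝ) : Word d → ℝ :=
  fun u => ∑ k ∈ Finset.range (u.length + 1), g (u.take k) * h (u.drop k)

/-- Concatenation powers of a series. -/
noncomputable def powFun {d : ℕ} (L : Word d → ℝ) : ℕ → Word d → ℝ
  | 0 => fun u => if u = [] then 1 else 0
  | k + 1 => mulFun L (powFun L k)

/-- The tensor exponential of a series with zero constant term. -/
noncomputable def expF {d : ℕ} (L : Word d → ℝ) : Word d → ℝ :=
  fun u => ∑ k ∈ Finset.range (u.length + 1), ((k.factorial : ℝ))⁻¹ * powFun L k u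

section Aux
variable {d : ℕ}

lemma pairF_single (g : Word d → ℝ) (w : Word d) (c : ℝ) :
    pairF g (Finsupp.single w c) = c * g w := by
  simp [pairF, Finsupp.sum_single_index]

lemma pairF_addF (g : Word d → ℝ) (f1 f2 : T d) :
    pairF g (f1 + f2) = pairF g f1 + pairF g f2 := by
  exact Finsupp.sum_add_index' (by simp) (by intro a b1 b2; ring)

lemma pairF_mapDomain_cons (g : Word d → ℝ) (a : Fin d) (s : T d) :
    pairF g (Finsupp.mapDomain (List.cons a) s) = pairF (fun w => g (a :: w)) s := by
  exact Finsupp.sum_mapDomain_index_inj (List.cons_injective)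

lemma pairF_addG (g1 g2 : Word d → ℝ) (f : T d) :
    pairF (fun x => g1 x + g2 x) f = pairF g1 f + pairF g2 f := by
  simp [pairF, Finsupp.sum, mul_add, Finset.sum_add_distrib]

lemma pairF_smulG (c : ℝ) (g : Word d → ℝ) (f : T d) :
    pairF (fun x => c * g x) f = c * pairF g f := by
  simp only [pairF, Finsupp.sum, Finset.mul_sum]; exact Finset.sum_congr rfl fun x _ => by ring

end Aux

section Shuf
variable {d : ℕ}

lemma shuffleW_nil_left (v : Word d) : shuffleW [] v = Finsupp.single v 1 := by
  rw [shuffleW]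

lemma shuffleW_nil_right (u : Word d) : shuffleW u [] = Finsupp.single u 1 := by
  cases u <;> rw [shuffleW] <;> simp

lemma shuffleW_cons_cons (a b : Fin d) (u v : Word d) :
    shuffleW (a :: u) (b :: v) =
      Finsupp.mapDomain (List.cons a) (shuffleW u (b :: v)) +
      Finsupp.mapDomain (List.cons b) (shuffleW (a :: u) v) := by
  rw [shuffleW]

end Shuf

noncomputable def pairS {d : ℕ} (g : Word d → ℝ) (u v : Word d) : ℝ := pairF g (shuffleW u v)

section PS
variable {d : ℕ}

lemma pairS_nil_left (g : Word d → ℝ) (v : Word d) : pairS g [] v = g v := by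
  simp [pairS, shuffleW_nil_left, pairF_single]

lemma pairS_nil_right (g : Word d → ℝ) (u : Word d) : pairS g u [] = g u := by
  simp [pairS, shuffleW_nil_right, pairF_single]

lemma pairS_cons_cons (g : Word d → ℝ) (a b : Fin d) (u v : Word d) :
    pairS g (a :: u) (b :: v) =
      pairS (fun w => g (a :: w)) u (b :: v) + pairS (fun w => g (b :: w)) (a :: u) v := by
  simp only [pairS, shuffleW_cons_cons, pairF_addF, pairF_mapDomain_cons]

lemma pairS_addG (g1 g2 : Word d → ℝ) (u v : Word d) :
    pairS (fun x => g1 x + g2 x) u v = pairS g1 u v + pairS g2 u v := pairF_addG _ _ _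

lemma pairS_smulG (c : ℝ) (g : Word d → ℝ) (u v : Word d) :
    pairS (fun x => c * g x) u v = c * pairS g u v := pairF_smulG _ _ _

end PS

section Bialg
variable {d : ℕ}

lemma pairS_congr {g1 g2 : Word d → ℝ} (u v : Word d) (h : ∀ x, g1 x = g2 x) :
    pairS g1 u v = pairS g2 u v := by rw [funext h]

lemma mulFun_cons (f g : Word d → ℝ) (a : Fin d) (w : Word d) :
    mulFun f g (a :: w) = f [] * g (a :: w) + mulFun (fun x => f (a :: x)) g w := by
  simp only [mulFun, List.length_cons]
  rw [Finset.sum_range_succ']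
  simp only [List.take_succ_cons, List.drop_succ_cons, List.take_zero, List.drop_zero,
    List.take_nil]
  ring

lemma pairS_mulFun_cons (f g : Word d → ℝ) (a : Fin d) (u v : Word d) :
    pairS (fun w => mulFun f g (a :: w)) u v =
      f [] * pairS (fun w => g (a :: w)) u v + pairS (mulFun (fun x => f (a :: x)) g) u v := by
  rw [← pairS_smulG, ← pairS_addG]
  exact pairS_congr u v fun w => by rw [mulFun_cons]

lemma pairS_mulFun (f g : Word d → ℝ) (u v : Word d) :
    pairS (mulFun f g) u v =
      ∑ i ∈ Finset.range (u.length + 1), ∑ j ∈ Finset.range (v.length + 1),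
        pairS f (u.take i) (v.take j) * pairS g (u.drop i) (v.drop j) := by
  induction u, v using shuffleW.induct generalizing f g with
  | case1 v => simp [pairS_nil_left, mulFun]
  | case2 a u => simp [pairS_nil_right, mulFun]
  | case3 a u b v ih1 ih2 =>
    have hsplit : ∀ (N : ℕ) (F : ℕ → ℝ),
        ∑ i ∈ Finset.range (N + 1), F i = F 0 + ∑ i ∈ Finset.range N, F (i + 1) := by
      intro N F; rw [Finset.sum_range_succ']; ring
    rw [pairS_cons_cons, pairS_mulFun_cons, pairS_mulFun_cons, ih1, ih2]
    simp only [List.length_cons, hsplit, List.take_succ_cons, List.drop_succ_cons,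
      List.take_zero, List.drop_zero, pairS_nil_left, pairS_nil_right, pairS_cons_cons,
      add_mul, mul_add, Finset.sum_add_distrib]
    ring

end Bialg

section Grp
variable {d : ℕ}

lemma mulFun_nil (f g : Word d → ℝ) : mulFun f g [] = f [] * g [] := by
  simp [mulFun]

lemma grouplike_mulFun {f g : Word d → ℝ} (hf : Grouplike f) (hg : Grouplike g) :
    Grouplike (mulFun f g) := by
  constructor
  · rw [mulFun_nil, hf.1, hg.1, one_mul]
  · intro u v
    have : pairF (mulFun f g) (shuffleW u v) = pairS (mulFun f g) u v := rfl
    rw [this, pairS_mulFun]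
    have : ∀ i j, pairS f (u.take i) (v.take j) * pairS g (u.drop i) (v.drop j) =
        (f (u.take i) * g (u.drop i)) * (f (v.take j) * g (v.drop j)) := by
      intro i j
      have h1 : pairS f (u.take i) (v.take j) = f (u.take i) * f (v.take j) := hf.2 _ _
      have h2 : pairS g (u.drop i) (v.drop j) = g (u.drop i) * g (v.drop j) := hg.2 _ _
      rw [h1, h2]; ring
    simp only [this]
    rw [← Finset.sum_mul_sum]
    rfl

end Grp

section Pow
variable {d : ℕ}

lemma powFun_eq_zero {L : Word d → ℝ} (hL0 : L [] = 0) :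
    ∀ (k : ℕ) (u : Word d), u.length < k → powFun L k u = 0 := by
  intro k
  induction k with
  | zero => intro u hu; omega
  | succ k ih =>
    intro u hu
    show mulFun L (powFun L k) u = 0
    unfold mulFun
    apply Finset.sum_eq_zero
    intro i hi
    simp only [Finset.mem_range] at hi
    match i with
    | 0 => simp [hL0]
    | (i + 1) =>
      have : (u.drop (i + 1)).length < k := by
        rw [List.length_drop]; omega
      rw [ih _ this, mul_zero]

lemma mulFun_assoc (f g h : Word d → ℝ) (u : Word d) :
    mulFun (mulFun f g) h u = mulFun f (mulFun g h) u := by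
  simp only [mulFun, Finset.sum_mul, Finset.mul_sum]
  rw [Finset.sum_sigma', Finset.sum_sigma']
  apply Finset.sum_nbij' (i := fun p => (⟨p.2, p.1 - p.2⟩ : (_ : ℕ) × ℕ))
    (j := fun p => (⟨p.1 + p.2, p.1⟩ : (_ : ℕ) × ℕ))
  · rintro ⟨l, k⟩ hp
    simp only [Finset.mem_sigma, Finset.mem_range, List.length_take, List.length_drop,
      lt_min_iff] at *
    omega
  · rintro ⟨k, j⟩ hp
    simp only [Finset.mem_sigma, Finset.mem_range, List.length_take, List.length_drop,
      lt_min_iff] at *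
    omega
  · rintro ⟨l, k⟩ hp
    simp only [Finset.mem_sigma, Finset.mem_range, List.length_take, lt_min_iff] at hp
    have : k + (l - k) = l := by omega
    simp [this]
  · rintro ⟨k, j⟩ hp
    simp
  · rintro ⟨l, k⟩ hp
    simp only [Finset.mem_sigma, Finset.mem_range, List.length_take, lt_min_iff] at hp
    simp only
    have hk : k ≤ l := by omega
    have hl : l ≤ u.length := by omega
    have h2 : k + (l - k) = l := by omega
    rw [List.take_take, min_eq_left hk, List.drop_take, List.drop_drop, h2]
    ring

end Pow

section Pow2
variable {d : ℕ}

lemma mulFun_one_left (L h : Word d → ℝ) (u : Word d) : mulFun (powFun L 0) h u = h u := by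
  unfold mulFun powFun
  rw [Finset.sum_eq_single_of_mem 0 (by simp)]
  · simp
  · intro k hk hk0
    have : u.take k ≠ [] := by
      simp only [Finset.mem_range] at hk
      rw [← List.length_pos_iff, List.length_take]
      omega
    simp [this]

lemma mulFun_one_right (L h : Word d → ℝ) (u : Word d) : mulFun h (powFun L 0) u = h u := by
  unfold mulFun powFun
  rw [Finset.sum_eq_single_of_mem u.length (by simp)]
  · simp [List.take_length, List.drop_length]
  · intro k hk hk0
    have : u.drop k ≠ [] := by
      simp only [Finset.mem_range] at hk
      rw [← List.length_pos_iff]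
      rw [List.length_drop]
      omega
    simp [this]

lemma powFun_succ_right (L : Word d → ℝ) (k : ℕ) :
    powFun L (k + 1) = mulFun (powFun L k) L := by
  induction k with
  | zero =>
    funext u
    show mulFun L (powFun L 0) u = mulFun (powFun L 0) L u
    rw [mulFun_one_left, mulFun_one_right]
  | succ k ih =>
    funext u
    show mulFun L (powFun L (k + 1)) u = mulFun (powFun L (k + 1)) L u
    have h2 : mulFun L (powFun L k) = mulFun (powFun L k) L := ih
    rw [ih, ← mulFun_assoc, h2]

lemma powFun_smul (L : Word d → ℝ) (c : ℝ) (k : ℕ) (u : Word d) :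
    powFun (fun w => c * L w) k u = c ^ k * powFun L k u := by
  induction k generalizing u with
  | zero => simp [powFun]
  | succ k ih =>
    show mulFun _ _ u = _
    rw [show powFun L (k + 1) = mulFun L (powFun L k) from rfl]
    unfold mulFun
    rw [Finset.mul_sum]
    apply Finset.sum_congr rfl
    intro i _
    rw [ih]
    ring

end Pow2

section Supp
variable {d : ℕ}

lemma length_of_mem_support_shuffleW :
    ∀ (u v : Word d), ∀ w ∈ (shuffleW u v).support, w.length = u.length + v.length := by
  intro u v
  induction u, v using shuffleW.induct with
  | case1 v =>
    intro w hw
    rw [shuffleW_nil_left] at hw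
    have := Finsupp.support_single_subset hw
    simp at this
    simp [this]
  | case2 a u =>
    intro w hw
    rw [shuffleW_nil_right] at hw
    have := Finsupp.support_single_subset hw
    simp at this
    simp [this]
  | case3 a u b v ih1 ih2 =>
    intro w hw
    rw [shuffleW_cons_cons] at hw
    have := Finsupp.support_add hw
    simp only [Finset.mem_union] at this
    rcases this with hw | hw
    · have := Finsupp.mapDomain_support hw
      simp only [Finset.mem_image] at this
      obtain ⟨x, hx, rfl⟩ := this
      have := ih1 x hx
      simp at this ⊢
      omega
    · have := Finsupp.mapDomain_support hw
      simp only [Finset.mem_image] at this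
      obtain ⟨x, hx, rfl⟩ := this
      have := ih2 x hx
      simp at this ⊢
      omega

lemma pairF_P0 (L : Word d → ℝ) (s : T d) : pairF (powFun L 0) s = s [] := by
  unfold pairF powFun Finsupp.sum
  simp only [mul_ite, mul_one, mul_zero]
  rw [Finset.sum_ite_eq' s.support ([]) (fun a => s a)]
  split
  · rfl
  · next hmem => exact (Finsupp.notMem_support_iff.mp hmem).symm

lemma grouplike_P0 (L : Word d → ℝ) : Grouplike (powFun L 0) := by
  constructor
  · simp [powFun]
  · intro u v
    rw [pairF_P0]
    by_cases hu : u = []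
    · by_cases hv : v = []
      · subst hu; subst hv; simp [shuffleW_nil_left, powFun]
      · subst hu
        rw [shuffleW_nil_left]
        rw [Finsupp.single_apply]
        simp [powFun, hv, Ne.symm hv]
    · have : (shuffleW u v) [] = 0 := by
        by_contra hne
        have : ([] : Word d) ∈ (shuffleW u v).support := Finsupp.mem_support_iff.mpr hne
        have := length_of_mem_support_shuffleW u v [] this
        simp at this
        have hlen : u.length = 0 := by omega
        exact hu (List.length_eq_zero_iff.mp hlen)
      rw [this]
      simp [powFun, hu]

end Supp

section ExpL
variable {d : ℕ}

lemma expF_smul (L : Word d → ℝ) (t : ℝ) (u : Word d) :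
    expF (fun w => t * L w) u =
      ∑ k ∈ Finset.range (u.length + 1), (k.factorial : ℝ)⁻¹ * powFun L k u * t ^ k := by
  unfold expF
  apply Finset.sum_congr rfl
  intro k _
  rw [powFun_smul]
  ring

lemma mulFun_L_expF {L : Word d → ℝ} (hL0 : L [] = 0) (t : ℝ) (u : Word d) :
    mulFun L (expF fun w => t * L w) u =
      ∑ k ∈ Finset.range (u.length + 1), (k.factorial : ℝ)⁻¹ * powFun L (k + 1) u * t ^ k := by
  unfold mulFun
  have step1 : ∀ i ∈ Finset.range (u.length + 1),
      L (u.take i) * expF (fun w => t * L w) (u.drop i) =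
      ∑ k ∈ Finset.range (u.length + 1),
        L (u.take i) * ((k.factorial : ℝ)⁻¹ * powFun L k (u.drop i) * t ^ k) := by
    intro i hi
    rw [expF_smul, Finset.mul_sum]
    apply Finset.sum_subset
    · intro k hk
      simp only [Finset.mem_range, List.length_drop] at *
      omega
    · intro k hk hk2
      simp only [Finset.mem_range, List.length_drop] at *
      rw [powFun_eq_zero hL0 k _ (by rw [List.length_drop]; omega)]
      ring
  rw [Finset.sum_congr rfl step1, Finset.sum_comm]
  apply Finset.sum_congr rfl
  intro k _
  have hdef : powFun L (k + 1) u =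
      ∑ i ∈ Finset.range (u.length + 1), L (u.take i) * powFun L k (u.drop i) := rfl
  rw [hdef, Finset.mul_sum, Finset.sum_mul]
  apply Finset.sum_congr rfl
  intro i _
  ring

lemma mulFun_expF_L {L : Word d → ℝ} (hL0 : L [] = 0) (t : ℝ) (u : Word d) :
    mulFun (expF fun w => t * L w) L u =
      ∑ k ∈ Finset.range (u.length + 1), (k.factorial : ℝ)⁻¹ * powFun L (k + 1) u * t ^ k := by
  unfold mulFun
  have step1 : ∀ i ∈ Finset.range (u.length + 1),
      expF (fun w => t * L w) (u.take i) * L (u.drop i) =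
      ∑ k ∈ Finset.range (u.length + 1),
        (k.factorial : ℝ)⁻¹ * powFun L k (u.take i) * t ^ k * L (u.drop i) := by
    intro i hi
    rw [expF_smul, Finset.sum_mul]
    apply Finset.sum_subset
    · intro k hk
      simp only [Finset.mem_range, List.length_take] at *
      omega
    · intro k hk hk2
      simp only [Finset.mem_range, List.length_take] at *
      rw [powFun_eq_zero hL0 k _ (by simp [List.length_take]; omega)]
      ring
  rw [Finset.sum_congr rfl step1, Finset.sum_comm]
  apply Finset.sum_congr rfl
  intro k _
  have hdef : powFun L (k + 1) u =
      ∑ i ∈ Finset.range (u.length + 1), powFun L k (u.take i) * L (u.drop i) := by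
    rw [powFun_succ_right]
    rfl
  rw [hdef, Finset.mul_sum, Finset.sum_mul]
  apply Finset.sum_congr rfl
  intro i _
  ring

lemma mulFun_expF_comm {L : Word d → ℝ} (hL0 : L [] = 0) (t : ℝ) :
    mulFun L (expF fun w => t * L w) = mulFun (expF fun w => t * L w) L := by
  funext u
  rw [mulFun_L_expF hL0, mulFun_expF_L hL0]

lemma hasDerivAt_expF {L : Word d → ℝ} (hL0 : L [] = 0) (u : Word d) (t : ℝ) :
    HasDerivAt (fun s => expF (fun w => s * L w) u)
      (mulFun L (expF fun w => t * L w) u) t := by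
  have key : HasDerivAt
      (fun s : ℝ => ∑ k ∈ Finset.range (u.length + 1),
        (k.factorial : ℝ)⁻¹ * powFun L k u * s ^ k)
      (∑ k ∈ Finset.range (u.length + 1),
        (k.factorial : ℝ)⁻¹ * powFun L k u * (k * t ^ (k - 1))) t := by
    apply HasDerivAt.fun_sum
    intro k _
    exact (hasDerivAt_pow k t).const_mul _
  have heq : (fun s : ℝ => expF (fun w => s * L w) u) =
      fun s : ℝ => ∑ k ∈ Finset.range (u.length + 1),
        (k.factorial : ℝ)⁻¹ * powFun L k u * s ^ k := by
    funext s
    exact expF_smul L s u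
  rw [heq, mulFun_L_expF hL0]
  convert key using 1
  have hzero : powFun L (u.length + 1) u = 0 := powFun_eq_zero hL0 _ _ (by omega)
  rw [Finset.sum_range_succ, hzero, Finset.sum_range_succ']
  simp only [Nat.cast_zero, zero_mul, mul_zero, add_zero, pow_zero, mul_one]
  apply Finset.sum_congr rfl
  intro j _
  have h1 : (((j + 1).factorial : ℕ) : ℝ) = ((j : ℝ) + 1) * (j.factorial : ℝ) := by
    rw [Nat.factorial_succ]; push_cast; ring
  rw [h1, Nat.add_sub_cancel]
  have h2 : (j.factorial : ℝ) ≠ 0 := Nat.cast_ne_zero.mpr (Nat.factorial_ne_zero j)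
  have h3 : ((j : ℝ) + 1) ≠ 0 := by positivity
  push_cast
  field_simp

end ExpL

section Anal
variable {d : ℕ}

lemma eq_of_hasDerivAt_zero {f : ℝ → ℝ} (h : ∀ t, HasDerivAt f 0 t) (a b : ℝ) : f a = f b :=
  is_const_of_deriv_eq_zero (fun t => (h t).differentiableAt) (fun t => (h t).deriv) a b

lemma hasDerivAt_pairF (s : T d) {F : ℝ → Word d → ℝ} {DF : Word d → ℝ} {t : ℝ}
    (h : ∀ w, HasDerivAt (fun t => F t w) (DF w) t) :
    HasDerivAt (fun t => pairF (F t) s) (pairF DF s) t := by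
  have e1 : (fun t => pairF (F t) s) = fun t => ∑ x ∈ s.support, s x * F t x := rfl
  have e2 : pairF DF s = ∑ x ∈ s.support, s x * DF x := rfl
  rw [e1, e2]
  apply HasDerivAt.fun_sum
  intro x _
  exact (h x).const_mul (s x)

lemma expF_zero_smul (L : Word d → ℝ) (w : Word d) :
    expF (fun x => (0:ℝ) * L x) w = powFun L 0 w := by
  rw [expF_smul]
  rw [Finset.sum_eq_single_of_mem 0 (by simp)]
  · simp
  · intro k _ hk0
    simp [zero_pow hk0]

end Anal

section GrpExp
variable {d : ℕ}

lemma pairS_mulFun_L {L : Word d → ℝ} (hL : LieSeries L) (h' : Word d → ℝ) (u v : Word d) :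
    pairS (mulFun L h') u v =
      ∑ j ∈ Finset.range (v.length + 1), L (v.take j) * pairS h' u (v.drop j) +
      ∑ i ∈ Finset.range (u.length + 1), L (u.take i) * pairS h' (u.drop i) v := by
  rw [pairS_mulFun, Finset.sum_range_succ']
  have h0 : (∑ j ∈ Finset.range (v.length + 1),
      pairS L (u.take 0) (v.take j) * pairS h' (u.drop 0) (v.drop j)) =
      ∑ j ∈ Finset.range (v.length + 1), L (v.take j) * pairS h' u (v.drop j) := by
    apply Finset.sum_congr rfl
    intro j _
    simp [pairS_nil_left]
  have h1 : (∑ i ∈ Finset.range u.length, ∑ j ∈ Finset.range (v.length + 1),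
      pairS L (u.take (i + 1)) (v.take j) * pairS h' (u.drop (i + 1)) (v.drop j)) =
      ∑ i ∈ Finset.range u.length, L (u.take (i + 1)) * pairS h' (u.drop (i + 1)) v := by
    apply Finset.sum_congr rfl
    intro i hi
    simp only [Finset.mem_range] at hi
    rw [Finset.sum_eq_single_of_mem 0 (by simp)]
    · simp [pairS_nil_right]
    · intro j hj hj0
      simp only [Finset.mem_range] at hj
      have hz : pairS L (u.take (i + 1)) (v.take j) = 0 :=
        hL.2 (u.take (i + 1)) (v.take j)
          (by rw [← List.length_pos_iff, List.length_take, lt_min_iff]; omega)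
          (by rw [← List.length_pos_iff, List.length_take, lt_min_iff]; omega)
      rw [hz]
      ring
  have h2 : (∑ i ∈ Finset.range (u.length + 1), L (u.take i) * pairS h' (u.drop i) v) =
      ∑ i ∈ Finset.range u.length, L (u.take (i + 1)) * pairS h' (u.drop (i + 1)) v := by
    rw [Finset.sum_range_succ']
    simp [hL.1]
  rw [h0, h1, h2]
  ring

lemma grouplike_expF {L : Word d → ℝ} (hL : LieSeries L) (t : ℝ) :
    Grouplike (expF fun w => t * L w) := by
  constructor
  · simp [expF, powFun]
  · suffices H : ∀ (n : ℕ) (u v : Word d), u.length + v.length = n → ∀ s : ℝ,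
        pairS (expF fun w => s * L w) u v =
          expF (fun w => s * L w) u * expF (fun w => s * L w) v by
      intro u v
      exact H _ u v rfl t
    intro n
    induction n using Nat.strong_induction_on with
    | _ n ih =>
      intro u v hn s
      have hderiv : ∀ s' : ℝ,
          HasDerivAt (fun s => pairS (expF fun w => s * L w) u v -
            expF (fun w => s * L w) u * expF (fun w => s * L w) v) 0 s' := by
        intro s'
        have d1 : HasDerivAt (fun s => pairS (expF fun w => s * L w) u v)
            (pairS (mulFun L (expF fun w => s' * L w)) u v) s' :=
          hasDerivAt_pairF (shuffleW u v) (fun w => hasDerivAt_expF hL.1 w s')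
        have d2 : HasDerivAt
            (fun s => expF (fun w => s * L w) u * expF (fun w => s * L w) v)
            (mulFun L (expF fun w => s' * L w) u * expF (fun w => s' * L w) v +
              expF (fun w => s' * L w) u * mulFun L (expF fun w => s' * L w) v) s' :=
          (hasDerivAt_expF hL.1 u s').mul (hasDerivAt_expF hL.1 v s')
        have h3 := d1.sub d2
        have heq : pairS (mulFun L (expF fun w => s' * L w)) u v -
            (mulFun L (expF fun w => s' * L w) u * expF (fun w => s' * L w) v +
              expF (fun w => s' * L w) u * mulFun L (expF fun w => s' * L w) v) = 0 := by
          rw [pairS_mulFun_L hL]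
          have s1 : (∑ j ∈ Finset.range (v.length + 1),
              L (v.take j) * pairS (expF fun w => s' * L w) u (v.drop j)) =
              expF (fun w => s' * L w) u * mulFun L (expF fun w => s' * L w) v := by
            have hm : mulFun L (expF fun w => s' * L w) v =
                ∑ j ∈ Finset.range (v.length + 1),
                  L (v.take j) * expF (fun w => s' * L w) (v.drop j) := rfl
            rw [hm, Finset.mul_sum]
            apply Finset.sum_congr rfl
            intro j hj
            simp only [Finset.mem_range] at hj
            rcases Nat.eq_zero_or_pos j with rfl | hj1
            · simp [hL.1]
            · rw [ih (u.length + (v.drop j).length)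
                (by rw [List.length_drop]; omega) u (v.drop j) rfl s']
              ring
          have s2 : (∑ i ∈ Finset.range (u.length + 1),
              L (u.take i) * pairS (expF fun w => s' * L w) (u.drop i) v) =
              mulFun L (expF fun w => s' * L w) u * expF (fun w => s' * L w) v := by
            have hm : mulFun L (expF fun w => s' * L w) u =
                ∑ i ∈ Finset.range (u.length + 1),
                  L (u.take i) * expF (fun w => s' * L w) (u.drop i) := rfl
            rw [hm, Finset.sum_mul]
            apply Finset.sum_congr rfl
            intro i hi
            simp only [Finset.mem_range] at hi
            rcases Nat.eq_zero_or_pos i with rfl | hi1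
            · simp [hL.1]
            · rw [ih ((u.drop i).length + v.length)
                (by rw [List.length_drop]; omega) (u.drop i) v rfl s']
              ring
          rw [s1, s2]
          ring
        rw [heq] at h3
        exact h3
      have hconst := eq_of_hasDerivAt_zero hderiv s 0
      have hzero : pairS (expF fun w => (0:ℝ) * L w) u v -
          expF (fun w => (0:ℝ) * L w) u * expF (fun w => (0:ℝ) * L w) v = 0 := by
        have e1 : pairS (expF fun w => (0:ℝ) * L w) u v = pairS (powFun L 0) u v :=
          pairS_congr u v (expF_zero_smul L)
        have e2 : pairS (powFun L 0) u v = powFun L 0 u * powFun L 0 v := (grouplike_P0 L).2 u v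
        rw [e1, e2, expF_zero_smul, expF_zero_smul]
        ring
      rw [hzero] at hconst
      linarith [hconst]

end GrpExp

section Main
variable {d : ℕ}

lemma mulFun_assoc' (f g h : Word d → ℝ) :
    mulFun (mulFun f g) h = mulFun f (mulFun g h) := funext (mulFun_assoc f g h)

lemma hasDerivAt_expF_neg {L : Word d → ℝ} (hL0 : L [] = 0) (w : Word d) (t : ℝ) :
    HasDerivAt (fun s : ℝ => expF (fun x => -s * L x) w)
      (-(mulFun L (expF fun x => -t * L x) w)) t := by
  have h1 : HasDerivAt (fun s : ℝ => expF (fun x => s * L x) w)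
      (mulFun L (expF fun x => -t * L x) w) (-t) := hasDerivAt_expF hL0 w (-t)
  have hneg : HasDerivAt (fun s : ℝ => -s) (-1) t := (hasDerivAt_id t).neg
  have h2 := HasDerivAt.comp t h1 hneg
  have h3 : HasDerivAt (fun s : ℝ => expF (fun x => -s * L x) w)
      (mulFun L (expF fun x => -t * L x) w * -1) t := h2
  rw [mul_neg_one] at h3
  exact h3

lemma hasDerivAt_mulFun_g_negExp {L : Word d → ℝ} (hL0 : L [] = 0) (g : Word d → ℝ)
    (w : Word d) (t : ℝ) :
    HasDerivAt (fun s : ℝ => mulFun g (expF fun x => -s * L x) w)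
      (-(mulFun g (mulFun L (expF fun x => -t * L x)) w)) t := by
  have key : HasDerivAt
      (fun s : ℝ => ∑ j ∈ Finset.range (w.length + 1),
        g (w.take j) * expF (fun x => -s * L x) (w.drop j))
      (∑ j ∈ Finset.range (w.length + 1),
        g (w.take j) * (-(mulFun L (expF fun x => -t * L x) (w.drop j)))) t := by
    apply HasDerivAt.fun_sum
    intro j _
    exact (hasDerivAt_expF_neg hL0 (w.drop j) t).const_mul _
  have hfun : (fun s : ℝ => mulFun g (expF fun x => -s * L x) w) =
      fun s : ℝ => ∑ j ∈ Finset.range (w.length + 1),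
        g (w.take j) * expF (fun x => -s * L x) (w.drop j) := rfl
  have hval : (∑ j ∈ Finset.range (w.length + 1),
      g (w.take j) * (-(mulFun L (expF fun x => -t * L x) (w.drop j)))) =
      -(mulFun g (mulFun L (expF fun x => -t * L x)) w) := by
    unfold mulFun
    rw [← Finset.sum_neg_distrib]
    apply Finset.sum_congr rfl
    intro j _
    ring
  rw [hfun]
  rw [← hval] at *
  exact key

lemma hasDerivAt_conj {L : Word d → ℝ} (hL0 : L [] = 0) (g : Word d → ℝ)
    (u : Word d) (t : ℝ) :
    HasDerivAt
      (fun s : ℝ => mulFun (expF fun w => s * L w) (mulFun g (expF fun w => -s * L w)) u)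
      (mulFun L (mulFun (expF fun w => t * L w) (mulFun g (expF fun w => -t * L w))) u -
        mulFun (mulFun (expF fun w => t * L w) (mulFun g (expF fun w => -t * L w))) L u) t := by
  have key : HasDerivAt
      (fun s : ℝ => ∑ i ∈ Finset.range (u.length + 1),
        expF (fun w => s * L w) (u.take i) * mulFun g (expF fun w => -s * L w) (u.drop i))
      (∑ i ∈ Finset.range (u.length + 1),
        (mulFun L (expF fun w => t * L w) (u.take i) *
            mulFun g (expF fun w => -t * L w) (u.drop i) +
          expF (fun w => t * L w) (u.take i) *
            (-(mulFun g (mulFun L (expF fun x => -t * L x)) (u.drop i))))) t := by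
    apply HasDerivAt.fun_sum
    intro i _
    exact (hasDerivAt_expF hL0 (u.take i) t).mul (hasDerivAt_mulFun_g_negExp hL0 g (u.drop i) t)
  have hfun : (fun s : ℝ =>
      mulFun (expF fun w => s * L w) (mulFun g (expF fun w => -s * L w)) u) =
      fun s : ℝ => ∑ i ∈ Finset.range (u.length + 1),
        expF (fun w => s * L w) (u.take i) * mulFun g (expF fun w => -s * L w) (u.drop i) := rfl
  have hval : (∑ i ∈ Finset.range (u.length + 1),
      (mulFun L (expF fun w => t * L w) (u.take i) *
          mulFun g (expF fun w => -t * L w) (u.drop i) +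
        expF (fun w => t * L w) (u.take i) *
          (-(mulFun g (mulFun L (expF fun x => -t * L x)) (u.drop i))))) =
      mulFun L (mulFun (expF fun w => t * L w) (mulFun g (expF fun w => -t * L w))) u -
        mulFun (mulFun (expF fun w => t * L w) (mulFun g (expF fun w => -t * L w))) L u := by
    have hX : mulFun (mulFun L (expF fun w => t * L w))
        (mulFun g (expF fun w => -t * L w)) u =
        mulFun L (mulFun (expF fun w => t * L w) (mulFun g (expF fun w => -t * L w))) u := by
      rw [mulFun_assoc']
    have hY : mulFun (expF fun w => t * L w)
        (mulFun g (mulFun L (expF fun x => -t * L x))) u =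
        mulFun (mulFun (expF fun w => t * L w) (mulFun g (expF fun w => -t * L w))) L u := by
      rw [mulFun_expF_comm hL0 (-t), ← mulFun_assoc' g, ← mulFun_assoc']
    rw [← hX, ← hY]
    unfold mulFun
    rw [← Finset.sum_sub_distrib]
    apply Finset.sum_congr rfl
    intro i _
    ring
  rw [hfun, ← hval] at *
  exact key

end Main

/-- Infinitesimal invariance under commutators with `L` against grouplikes implies invariance
of the pairing under conjugation by `exp L`. -/
theorem stmt_14 {d m : ℕ} (L g : Word d → ℝ) (hL : LieSeries L) (hg : Grouplike g)
    (φ : T d) (hφ : ∀ u ∈ φ.support, u.length = m)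
    (h : ∀ h' : Word d → ℝ, Grouplike h' →
      pairF (fun u => mulFun L h' u - mulFun h' L u) φ = 0) :
    pairF (mulFun (expF L) (mulFun g (expF fun u => -L u))) φ = pairF g φ := by
  have hL0 : L [] = 0 := hL.1
  have hGrp : ∀ t : ℝ, Grouplike
      (mulFun (expF fun w => t * L w) (mulFun g (expF fun w => -t * L w))) := by
    intro t
    exact grouplike_mulFun (grouplike_expF hL t)
      (grouplike_mulFun hg (grouplike_expF hL (-t)))
  have hderiv : ∀ t : ℝ, HasDerivAt
      (fun s : ℝ => pairF (mulFun (expF fun w => s * L w)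
        (mulFun g (expF fun w => -s * L w))) φ) 0 t := by
    intro t
    have hd : HasDerivAt
        (fun s : ℝ => pairF (mulFun (expF fun w => s * L w)
          (mulFun g (expF fun w => -s * L w))) φ)
        (pairF (fun u =>
          mulFun L (mulFun (expF fun w => t * L w) (mulFun g (expF fun w => -t * L w))) u -
          mulFun (mulFun (expF fun w => t * L w) (mulFun g (expF fun w => -t * L w))) L u) φ)
        t :=
      hasDerivAt_pairF
        (F := fun s u => mulFun (expF fun w => s * L w)
          (mulFun g (expF fun w => -s * L w)) u)
        φ (fun u => hasDerivAt_conj hL0 g u t)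
    have hz := h _ (hGrp t)
    rw [hz] at hd
    exact hd
  have hconst : pairF (mulFun (expF fun w => (1:ℝ) * L w)
      (mulFun g (expF fun w => -(1:ℝ) * L w))) φ =
      pairF (mulFun (expF fun w => (0:ℝ) * L w)
      (mulFun g (expF fun w => -(0:ℝ) * L w))) φ :=
    eq_of_hasDerivAt_zero hderiv 1 0
  have hone : pairF (mulFun (expF L) (mulFun g (expF fun u => -L u))) φ =
      pairF (mulFun (expF fun w => (1:ℝ) * L w)
        (mulFun g (expF fun w => -(1:ℝ) * L w))) φ := by
    have e1 : expF L = expF (fun w => (1:ℝ) * L w) :=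
      congrArg expF (funext fun w => (one_mul (L w)).symm)
    have e2 : (expF fun u => -L u) = expF (fun w => -(1:ℝ) * L w) :=
      congrArg expF (funext fun w => by ring)
    rw [e1, e2]
  have hzero : pairF (mulFun (expF fun w => (0:ℝ) * L w)
      (mulFun g (expF fun w => -(0:ℝ) * L w))) φ = pairF g φ := by
    have hg0 : ∀ u, mulFun (expF fun w => (0:ℝ) * L w)
        (mulFun g (expF fun w => -(0:ℝ) * L w)) u = g u := by
      intro u
      have e1 : expF (fun w => (0:ℝ) * L w) = powFun L 0 := funext (expF_zero_smul L)
      have e2 : expF (fun w => -(0:ℝ) * L w) = powFun L 0 := by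
        have e3 : (fun w => -(0:ℝ) * L w) = (fun w => (0:ℝ) * L w) := by
          funext w; ring
        rw [e3]
        exact e1
      rw [e1, e2, mulFun_one_left L, mulFun_one_right L]
    rw [funext hg0]
  rw [hone, hconst, hzero]
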